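/- arXiv:2006.07189 — 4 statements merged into one kernel-verified Lean document; each statement's English description precedes it below -/
import Mathlib

section
/- Define D(x₁,x₂) = (√2/π²)(cos(π x₁) - cos(π x₂)). Then for all 0 ≤ x₁ ≤ x₂ ≤ 1: if x₁ + x₂ ≤ 1 then D(x₁,x₂) ≥ (√2/(8π²))(x₂ - x₁)(x₂ + x₁), and if 1 < x₁ + x₂ ≤ 2 then D(x₁,x₂) ≥ (√2/(2π²))(x₂ - x₁)(1 - (x₁ + x₂)/2). -/
open Real

theorem drift_difference_lower_bound
    (D : ℝ → ℝ → ℝ)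
    (hD : ∀ x₁ x₂ : ℝ, D x₁ x₂ = (Real.sqrt 2 / π ^ 2) * (Real.cos (π * x₁) - Real.cos (π * x₂)))
    (x₁ x₂ : ℝ) (h0 : 0 ≤ x₁) (h12 : x₁ ≤ x₂) (h1 : x₂ ≤ 1) :
    (x₁ + x₂ ≤ 1 → D x₁ x₂ ≥ (Real.sqrt 2 / (8 * π ^ 2)) * (x₂ - x₁) * (x₂ + x₁)) ∧
    (1 < x₁ + x₂ → x₁ + x₂ ≤ 2 →
      D x₁ x₂ ≥ (Real.sqrt 2 / (2 * π ^ 2)) * (x₂ - x₁) * (1 - (x₁ + x₂) / 2)) := by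
  have hpi := Real.pi_pos
  have hs2 : (0:ℝ) < Real.sqrt 2 := by positivity
  have hprod : Real.cos (π * x₁) - Real.cos (π * x₂)
      = 2 * Real.sin (π / 2 * (x₁ + x₂)) * Real.sin (π / 2 * (x₂ - x₁)) := by
    rw [Real.cos_sub_cos, show (π * x₁ + π * x₂)/2 = π / 2 * (x₁ + x₂) by ring,
      show (π * x₁ - π * x₂)/2 = -(π / 2 * (x₂ - x₁)) by ring, Real.sin_neg]
    ring
  have hdiff : x₂ - x₁ ≤ Real.sin (π / 2 * (x₂ - x₁)) :=
    Real.le_sin_mul (by linarith) (by linarith)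
  constructor
  · intro hsum
    have hsum' : x₁ + x₂ ≤ Real.sin (π / 2 * (x₁ + x₂)) :=
      Real.le_sin_mul (by linarith) hsum
    rw [hD, hprod]
    have h2 : 2 * Real.sin (π / 2 * (x₁ + x₂)) * Real.sin (π / 2 * (x₂ - x₁))
        ≥ 2 * (x₁ + x₂) * (x₂ - x₁) := by
      have h1' : (0:ℝ) ≤ x₁ + x₂ := by linarith
      have h2' : (0:ℝ) ≤ x₂ - x₁ := by linarith
      nlinarith [hdiff, hsum']
    have hc : Real.sqrt 2 / π ^ 2 * (2 * (x₁ + x₂) * (x₂ - x₁))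
        ≥ Real.sqrt 2 / (8 * π ^ 2) * (x₂ - x₁) * (x₂ + x₁) := by
      rw [ge_iff_le, div_mul_eq_mul_div, div_mul_eq_mul_div, div_mul_eq_mul_div,
        div_le_div_iff₀ (by positivity) (by positivity)]
      nlinarith [hs2.le, sq_nonneg π, mul_nonneg (mul_nonneg hs2.le (by linarith : (0:ℝ) ≤ x₂ - x₁)) (by linarith : (0:ℝ) ≤ x₁ + x₂), sq_nonneg (π*π)]
    calc Real.sqrt 2 / π ^ 2 * (2 * Real.sin (π / 2 * (x₁ + x₂)) * Real.sin (π / 2 * (x₂ - x₁)))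
        ≥ Real.sqrt 2 / π ^ 2 * (2 * (x₁ + x₂) * (x₂ - x₁)) := by
          apply mul_le_mul_of_nonneg_left h2 (by positivity)
      _ ≥ _ := hc
  · intro hl hu
    have hrefl : Real.sin (π / 2 * (x₁ + x₂)) = Real.sin (π / 2 * (2 - (x₁ + x₂))) := by
      rw [show π / 2 * (2 - (x₁ + x₂)) = π - π / 2 * (x₁ + x₂) by ring, Real.sin_pi_sub]
    have hsum' : 2 - (x₁ + x₂) ≤ Real.sin (π / 2 * (2 - (x₁ + x₂))) :=
      Real.le_sin_mul (by linarith) (by linarith)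
    rw [hD, hprod, hrefl]
    have h2' : (0:ℝ) ≤ x₂ - x₁ := by linarith
    have h2 : 2 * Real.sin (π / 2 * (2 - (x₁+x₂))) * Real.sin (π / 2 * (x₂ - x₁))
        ≥ 2 * (2 - (x₁+x₂)) * (x₂ - x₁) := by
      nlinarith [hdiff, hsum']
    calc Real.sqrt 2 / π ^ 2 * (2 * Real.sin (π / 2 * (2 - (x₁+x₂))) * Real.sin (π / 2 * (x₂ - x₁)))
        ≥ Real.sqrt 2 / π ^ 2 * (2 * (2 - (x₁+x₂)) * (x₂ - x₁)) := by
          apply mul_le_mul_of_nonneg_left h2 (by positivity)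
      _ ≥ Real.sqrt 2 / (2 * π ^ 2) * (x₂ - x₁) * (1 - (x₁ + x₂) / 2) := by
          rw [ge_iff_le, div_mul_eq_mul_div, div_mul_eq_mul_div, div_mul_eq_mul_div,
            div_le_div_iff₀ (by positivity) (by positivity)]
          nlinarith [mul_nonneg (mul_nonneg hs2.le h2') (by linarith : (0:ℝ) ≤ 2 - (x₁+x₂)), sq_nonneg π]
end

section
/- There exist constants C₁, C₂ > 0 such that for all x₁, x₂ ∈ [0,1], C₁|x₁ - x₂| ≤ (1/π²) ∑_{n=1}^{∞} (1/n²)(cos(π n x₁) - cos(π n x₂))² ≤ C₂|x₁ - x₂|. -/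
/-!
The series has a closed form, `π ^ 2 * |x₁ - x₂| / 2`, so both constants can be taken to be `1 / 2`.
Expanding `(cos a - cos b) ^ 2 = 1 + (cos 2a + cos 2b) / 2 - cos (a + b) - cos (a - b)` reduces the
series to the Fourier series `∑ cos (2πnx) / n ^ 2 = π ^ 2 * B₂(|x|)` for `|x| ≤ 1`, where
`B₂(x) = x ^ 2 - x + 1 / 6` is the second Bernoulli polynomial, taken at `x = 0, x₁, x₂, (x₁ + x₂) / 2`
and `(x₁ - x₂) / 2`. In this combination the quadratic and constant parts of `B₂` cancel and only
the `|·|` terms survive.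
-/

open Real

lemma hasSum_one_div_succ_sq_mul_cos_of_mem_Icc {x : ℝ} (hx : x ∈ Set.Icc (0 : ℝ) 1) :
    HasSum (fun n : ℕ => 1 / ((n : ℝ) + 1) ^ 2 * cos (2 * π * ((n : ℝ) + 1) * x))
      (π ^ 2 * (x ^ 2 - x + 6⁻¹)) := by
  have h := hasSum_one_div_nat_pow_mul_cos (k := 1) one_ne_zero hx
  rw [← bernoulliFun] at h
  norm_num [bernoulliFun_two] at h
  have h' := (hasSum_nat_add_iff' 1).mpr h
  norm_num at h'
  rw [show π ^ 2 * (x ^ 2 - x + 6⁻¹) = (2 * π) ^ 2 / 2 / 2 * (x ^ 2 - x + 1 / 6) by ring]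
  simpa only [one_div] using h'

lemma hasSum_one_div_succ_sq_mul_cos {x : ℝ} (hx : x ∈ Set.Icc (-1 : ℝ) 1) :
    HasSum (fun n : ℕ => 1 / ((n : ℝ) + 1) ^ 2 * cos (2 * π * ((n : ℝ) + 1) * x))
      (π ^ 2 * (x ^ 2 - |x| + 6⁻¹)) := by
  have h := hasSum_one_div_succ_sq_mul_cos_of_mem_Icc ⟨abs_nonneg x, abs_le.mpr hx⟩
  rw [sq_abs] at h
  convert h using 3 with n
  conv_lhs => rw [← cos_abs, abs_mul, abs_of_nonneg (by positivity : 0 ≤ 2 * π * ((n : ℝ) + 1))]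

lemma cos_sub_cos_sq (a b : ℝ) :
    (cos a - cos b) ^ 2 = 1 + (cos (2 * a) + cos (2 * b)) / 2 - cos (a + b) - cos (a - b) := by
  rw [cos_two_mul, cos_two_mul, cos_add, cos_sub]
  ring

lemma hasSum_one_div_succ_sq_mul_cos_sub_cos_sq {x₁ x₂ : ℝ} (h₁ : x₁ ∈ Set.Icc (0 : ℝ) 1)
    (h₂ : x₂ ∈ Set.Icc (0 : ℝ) 1) :
    HasSum (fun n : ℕ => 1 / ((n : ℝ) + 1) ^ 2 *
        (cos (π * ((n : ℝ) + 1) * x₁) - cos (π * ((n : ℝ) + 1) * x₂)) ^ 2)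
      (π ^ 2 * |x₁ - x₂| / 2) := by
  obtain ⟨h₁0, h₁1⟩ := h₁
  obtain ⟨h₂0, h₂1⟩ := h₂
  have H := ((hasSum_one_div_succ_sq_mul_cos (x := 0) (by norm_num)).add
      (((hasSum_one_div_succ_sq_mul_cos (x := x₁) ⟨by linarith, h₁1⟩).add
        (hasSum_one_div_succ_sq_mul_cos (x := x₂) ⟨by linarith, h₂1⟩)).div_const 2)).sub
      ((hasSum_one_div_succ_sq_mul_cos (x := (x₁ + x₂) / 2) ⟨by linarith, by linarith⟩).add
        (hasSum_one_div_succ_sq_mul_cos (x := (x₁ - x₂) / 2) ⟨by linarith, by linarith⟩))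
  refine (congrArg (HasSum _) ?_).mp (H.congr_fun fun n => ?_)
  · rw [abs_of_nonneg h₁0, abs_of_nonneg h₂0, abs_of_nonneg (by linarith : 0 ≤ (x₁ + x₂) / 2),
      abs_div, abs_two]
    ring
  · rw [cos_sub_cos_sq]
    simp only [mul_zero, cos_zero]
    ring_nf

theorem variance_comparable_to_distance :
    ∃ C₁ C₂ : ℝ, 0 < C₁ ∧ 0 < C₂ ∧
      ∀ x₁ x₂ : ℝ, x₁ ∈ Set.Icc (0:ℝ) 1 → x₂ ∈ Set.Icc (0:ℝ) 1 →
        C₁ * |x₁ - x₂| ≤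
          (1 / π ^ 2) * ∑' n : ℕ, (1 / ((n:ℝ) + 1) ^ 2) *
            (Real.cos (π * ((n:ℝ) + 1) * x₁) - Real.cos (π * ((n:ℝ) + 1) * x₂)) ^ 2 ∧
        (1 / π ^ 2) * ∑' n : ℕ, (1 / ((n:ℝ) + 1) ^ 2) *
            (Real.cos (π * ((n:ℝ) + 1) * x₁) - Real.cos (π * ((n:ℝ) + 1) * x₂)) ^ 2 ≤
          C₂ * |x₁ - x₂| := by
  refine ⟨1 / 2, 1 / 2, by norm_num, by norm_num, fun x₁ x₂ h₁ h₂ => ?_⟩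
  have hscale : 1 / π ^ 2 * (π ^ 2 * |x₁ - x₂| / 2) = 1 / 2 * |x₁ - x₂| := by
    field_simp
  rw [(hasSum_one_div_succ_sq_mul_cos_sub_cos_sq h₁ h₂).tsum_eq, hscale]
  exact ⟨le_rfl, le_rfl⟩
end

section
/- For every a with 0 < a ≤ 1, ∫_{-1}^{1} ∫₀^{1} h^{-1/2} exp(-C a² (2x + h)² h) dh dx ≤ C'/a for a constant C' depending only on C > 0. -/
open Real

theorem integral_estimate_small_a (C : ℝ) (hC : 0 < C) :
    ∃ C' : ℝ, 0 < C' ∧ ∀ a : ℝ, 0 < a → a ≤ 1 →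
      ∫ x in (-1:ℝ)..1, ∫ h in (0:ℝ)..1,
          h ^ (-(1:ℝ)/2) * Real.exp (-C * a ^ 2 * (2 * x + h) ^ 2 * h) ≤ C' / a := by
  refine ⟨4, by norm_num, fun a ha ha1 => ?_⟩
  have h4 : (4:ℝ) ≤ 4 / a := by
    rw [le_div_iff₀ ha]; nlinarith
  refine le_trans ?_ h4
  -- value of ∫ h^{-1/2} on [0,1]
  have hval : (∫ h in (0:ℝ)..1, h ^ (-(1:ℝ)/2)) = 2 := by
    rw [integral_rpow (Or.inl (by norm_num))]
    rw [Real.zero_rpow (by norm_num)]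
    norm_num
  have hint : IntervalIntegrable (fun h : ℝ => h ^ (-(1:ℝ)/2)) MeasureTheory.volume 0 1 :=
    intervalIntegral.intervalIntegrable_rpow' (by norm_num)
  -- inner bound
  have inner_le : ∀ x : ℝ,
      (∫ h in (0:ℝ)..1, h ^ (-(1:ℝ)/2) * Real.exp (-C * a ^ 2 * (2 * x + h) ^ 2 * h)) ≤ 2 := by
    intro x
    have hmeas : MeasureTheory.AEStronglyMeasurable
        (fun h : ℝ => h ^ (-(1:ℝ)/2) * Real.exp (-C * a ^ 2 * (2 * x + h) ^ 2 * h))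
        (MeasureTheory.volume.restrict (Set.uIoc (0:ℝ) 1)) := by
      apply ContinuousOn.aestronglyMeasurable _ measurableSet_uIoc
      rw [Set.uIoc_of_le (by norm_num : (0:ℝ) ≤ 1)]
      exact (continuousOn_id.rpow_const (fun h hh => Or.inl (ne_of_gt hh.1))).mul
        (Continuous.continuousOn (by fun_prop))
    have hfi : IntervalIntegrable
        (fun h : ℝ => h ^ (-(1:ℝ)/2) * Real.exp (-C * a ^ 2 * (2 * x + h) ^ 2 * h))
        MeasureTheory.volume 0 1 := by
      apply hint.mono_fun hmeas
      filter_upwards [MeasureTheory.ae_restrict_mem measurableSet_uIoc] with h hh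
      have h0 : 0 ≤ h := le_of_lt (by simpa using hh.1)
      have hrp : 0 ≤ h ^ (-(1:ℝ)/2) := Real.rpow_nonneg h0 _
      have hexp : Real.exp (-C * a ^ 2 * (2 * x + h) ^ 2 * h) ≤ 1 := by
        apply Real.exp_le_one_iff.2
        have : 0 ≤ C * a ^ 2 * (2 * x + h) ^ 2 * h :=
          mul_nonneg (by positivity) h0
        nlinarith
      simp only [Real.norm_eq_abs, abs_of_nonneg hrp,
        abs_of_nonneg (mul_nonneg hrp (le_of_lt (Real.exp_pos _)))]
      nlinarith [Real.exp_pos (-C * a ^ 2 * (2 * x + h) ^ 2 * h)]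
    calc (∫ h in (0:ℝ)..1, h ^ (-(1:ℝ)/2) * Real.exp (-C * a ^ 2 * (2 * x + h) ^ 2 * h))
        ≤ ∫ h in (0:ℝ)..1, h ^ (-(1:ℝ)/2) := by
          apply intervalIntegral.integral_mono_on (by norm_num) hfi hint
          intro h hh
          have hrp : 0 ≤ h ^ (-(1:ℝ)/2) := Real.rpow_nonneg hh.1 _
          have hexp : Real.exp (-C * a ^ 2 * (2 * x + h) ^ 2 * h) ≤ 1 := by
            apply Real.exp_le_one_iff.2
            have : 0 ≤ C * a ^ 2 * (2 * x + h) ^ 2 * h :=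
              mul_nonneg (by positivity) hh.1
            nlinarith
          nlinarith [Real.exp_pos (-C * a ^ 2 * (2 * x + h) ^ 2 * h)]
      _ = 2 := hval
  -- outer bound
  by_cases hFI : IntervalIntegrable
      (fun x : ℝ => ∫ h in (0:ℝ)..1, h ^ (-(1:ℝ)/2) * Real.exp (-C * a ^ 2 * (2 * x + h) ^ 2 * h))
      MeasureTheory.volume (-1) 1
  · calc (∫ x in (-1:ℝ)..1, ∫ h in (0:ℝ)..1,
          h ^ (-(1:ℝ)/2) * Real.exp (-C * a ^ 2 * (2 * x + h) ^ 2 * h))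
        ≤ ∫ _x in (-1:ℝ)..1, (2:ℝ) := by
          apply intervalIntegral.integral_mono_on (by norm_num) hFI
            intervalIntegrable_const (fun x _ => inner_le x)
      _ = 4 := by simp; norm_num
  · rw [intervalIntegral.integral_undef hFI]; norm_num
end

section
/- For every a > 1 and constant C₄ > 0, ∫_{-1}^{1} ∫_{1/a²}^{1} h^{-1/2} exp(-C₄ a² (2x + h)² h) dh dx ≤ C (log a)/a for a constant C depending only on C₄. -/
open Real MeasureTheory Set

lemma gauss_integrable_aux (c h : ℝ) (hc : 0 < c) :
    Integrable (fun x : ℝ => Real.exp (-c * (2 * x + h) ^ 2)) := by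
  have h4 : (0:ℝ) < 4 * c := by linarith
  have heq : (fun x : ℝ => Real.exp (-c * (2 * x + h) ^ 2))
      = (fun y : ℝ => Real.exp (-(4 * c) * y ^ 2)) ∘ (fun x => x + h / 2) := by
    funext x
    simp only [Function.comp_apply]
    congr 1
    ring
  rw [heq]
  exact ((measurePreserving_add_right volume (h / 2)).integrable_comp
    (integrable_exp_neg_mul_sq h4).aestronglyMeasurable).mpr
    (integrable_exp_neg_mul_sq h4)

lemma gauss_integral_aux (c h : ℝ) (hc : 0 < c) :
    (∫ x : ℝ, Real.exp (-c * (2 * x + h) ^ 2)) = Real.sqrt (π / (4 * c)) := by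
  have heq : (fun x : ℝ => Real.exp (-c * (2 * x + h) ^ 2))
      = fun x : ℝ => Real.exp (-(4 * c) * (x + h / 2) ^ 2) := by
    funext x
    congr 1
    ring
  rw [heq]
  rw [MeasureTheory.integral_add_right_eq_self
    (fun y : ℝ => Real.exp (-(4 * c) * y ^ 2)) (h / 2)]
  exact integral_gaussian _

theorem integral_estimate_large_a (C₄ : ℝ) (hC₄ : 0 < C₄) :
    ∃ C : ℝ, 0 < C ∧ ∀ a : ℝ, 1 < a →
      ∫ x in (-1:ℝ)..1, ∫ h in (1/a^2:ℝ)..1,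
          h ^ (-(1:ℝ)/2) * Real.exp (-C₄ * a ^ 2 * (2 * x + h) ^ 2 * h)
        ≤ C * Real.log a / a := by
  refine ⟨Real.sqrt (π / C₄), Real.sqrt_pos.mpr (by positivity), ?_⟩
  intro a ha
  have ha0 : (0:ℝ) < a := lt_trans one_pos ha
  have hl : (0:ℝ) < 1 / a ^ 2 := by positivity
  have hle : (1:ℝ) / a ^ 2 ≤ 1 := by
    rw [div_le_one (by positivity)]
    nlinarith
  set K := Real.sqrt (π / C₄) with hK
  set s : Set ℝ := Ioc (-1:ℝ) 1 with hs
  set t : Set ℝ := Ioc (1 / a ^ 2 : ℝ) 1 with ht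
  set F : ℝ → ℝ → ℝ := fun x h =>
    h ^ (-(1:ℝ)/2) * Real.exp (-C₄ * a ^ 2 * (2 * x + h) ^ 2 * h) with hF
  have hrpow : ∀ h : ℝ, 0 < h → h ^ (-(1:ℝ)/2) = (Real.sqrt h)⁻¹ := by
    intro h hh
    rw [neg_div, Real.rpow_neg hh.le, ← Real.sqrt_eq_rpow]
  -- rewrite interval integrals as set integrals
  have hrw : (∫ x in (-1:ℝ)..1, ∫ h in (1/a^2:ℝ)..1, F x h)
      = ∫ x in s, ∫ h in t, F x h := by
    rw [intervalIntegral.integral_of_le (by norm_num : (-1:ℝ) ≤ 1)]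
    refine setIntegral_congr_fun measurableSet_Ioc fun x _ => ?_
    exact intervalIntegral.integral_of_le hle
  rw [show (∫ x in (-1:ℝ)..1, ∫ h in (1/a^2:ℝ)..1,
      h ^ (-(1:ℝ)/2) * Real.exp (-C₄ * a ^ 2 * (2 * x + h) ^ 2 * h))
      = ∫ x in s, ∫ h in t, F x h from hrw]
  -- nonnegativity
  have hFnonneg : ∀ x h : ℝ, 0 < h → 0 ≤ F x h := by
    intro x h hh
    have : (0:ℝ) ≤ h ^ (-(1:ℝ)/2) := Real.rpow_nonneg hh.le _
    positivity
  -- bound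
  have hFbound : ∀ x h : ℝ, h ∈ t → ‖F x h‖ ≤ a := by
    intro x h hmem
    obtain ⟨hh1, hh2⟩ := hmem
    have hh0 : 0 < h := lt_trans hl hh1
    have h1 : F x h ≤ (Real.sqrt h)⁻¹ * 1 := by
      simp only [hF]
      rw [hrpow h hh0]
      refine mul_le_mul_of_nonneg_left ?_ (by positivity)
      rw [Real.exp_le_one_iff]
      have hnn : 0 ≤ C₄ * a ^ 2 * (2 * x + h) ^ 2 * h := by positivity
      linarith
    have hsq : (1:ℝ) / a ≤ Real.sqrt h := by
      have hmono : Real.sqrt (1 / a ^ 2) ≤ Real.sqrt h := Real.sqrt_le_sqrt hh1.le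
      rwa [Real.sqrt_div' 1 (by positivity), Real.sqrt_one, Real.sqrt_sq ha0.le] at hmono
    have h2 : (Real.sqrt h)⁻¹ ≤ a := by
      have := inv_anti₀ (by positivity : (0:ℝ) < 1 / a) hsq
      rwa [one_div, inv_inv] at this
    have h0 : 0 ≤ F x h := hFnonneg x h hh0
    rw [Real.norm_eq_abs, abs_of_nonneg h0]
    calc F x h ≤ (Real.sqrt h)⁻¹ * 1 := h1
      _ = (Real.sqrt h)⁻¹ := mul_one _
      _ ≤ a := h2
  -- measurability via a.e. congruence with a sqrt-based function
  set G : ℝ × ℝ → ℝ := fun p =>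
    (Real.sqrt p.2)⁻¹ * Real.exp (-C₄ * a ^ 2 * (2 * p.1 + p.2) ^ 2 * p.2) with hG
  have hGmeas : Measurable G := by
    apply Measurable.mul
    · exact (Real.continuous_sqrt.comp continuous_snd).measurable.inv
    · exact (((measurable_const.mul
        (((measurable_fst.const_mul 2).add measurable_snd).pow_const 2)).mul
        measurable_snd)).exp
  have hmeasF : AEStronglyMeasurable (Function.uncurry F)
      ((volume.restrict s).prod (volume.restrict t)) := by
    rw [Measure.prod_restrict]
    refine hGmeas.aestronglyMeasurable.congr ?_
    filter_upwards [ae_restrict_mem (measurableSet_Ioc.prod measurableSet_Ioc)]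
      with p hp
    have hh0 : 0 < p.2 := lt_trans hl hp.2.1
    simp only [hG, hF, Function.uncurry]
    rw [hrpow p.2 hh0]
  have hprodfin : Fact ((volume.prod volume) (s ×ˢ t) < ⊤) := by
    constructor
    rw [Measure.prod_prod]
    exact ENNReal.mul_lt_top measure_Ioc_lt_top measure_Ioc_lt_top
  have hFint : Integrable (Function.uncurry F)
      ((volume.restrict s).prod (volume.restrict t)) := by
    haveI := hprodfin
    refine Integrable.mono' (g := fun _ => a) ?_ hmeasF ?_
    · rw [Measure.prod_restrict]
      exact integrable_const a
    · rw [Measure.prod_restrict]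
      filter_upwards [ae_restrict_mem (measurableSet_Ioc.prod measurableSet_Ioc)]
        with p hp
      exact hFbound p.1 p.2 hp.2
  -- Fubini
  rw [integral_integral_swap hFint]
  -- pointwise bound of the inner integral
  have hinner : ∀ h : ℝ, h ∈ t →
      (∫ x in s, F x h) ≤ K / (2 * a) * h⁻¹ := by
    intro h hmem
    obtain ⟨hh1, hh2⟩ := hmem
    have hh0 : 0 < h := lt_trans hl hh1
    have hc : (0:ℝ) < C₄ * a ^ 2 * h := by positivity
    have hexp : ∀ x : ℝ, Real.exp (-C₄ * a ^ 2 * (2 * x + h) ^ 2 * h)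
        = Real.exp (-(C₄ * a ^ 2 * h) * (2 * x + h) ^ 2) := by
      intro x; congr 1; ring
    have step1 : (∫ x in s, F x h)
        = h ^ (-(1:ℝ)/2) * ∫ x in s, Real.exp (-(C₄ * a ^ 2 * h) * (2 * x + h) ^ 2) := by
      simp only [hF]
      simp_rw [hexp]
      exact integral_const_mul _ _
    have step2 : (∫ x in s, Real.exp (-(C₄ * a ^ 2 * h) * (2 * x + h) ^ 2))
        ≤ Real.sqrt (π / (4 * (C₄ * a ^ 2 * h))) := by
      rw [← gauss_integral_aux (C₄ * a ^ 2 * h) h hc]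
      exact setIntegral_le_integral (gauss_integrable_aux _ _ hc)
        (Filter.Eventually.of_forall fun x => (Real.exp_pos _).le)
    have step3 : Real.sqrt (π / (4 * (C₄ * a ^ 2 * h)))
        = K / (2 * a) * (Real.sqrt h)⁻¹ := by
      have harg : π / (4 * (C₄ * a ^ 2 * h)) = (π / C₄) / ((2 * a) ^ 2 * h) := by
        rw [div_eq_div_iff (by positivity) (by positivity)]
        field_simp
        ring
      rw [harg, Real.sqrt_div (by positivity) _, Real.sqrt_mul (by positivity),
        Real.sqrt_sq (by positivity), hK, ← div_div, div_eq_mul_inv (Real.sqrt (π / C₄) / (2 * a))]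
    have hrnn : (0:ℝ) ≤ h ^ (-(1:ℝ)/2) := Real.rpow_nonneg hh0.le _
    calc (∫ x in s, F x h)
        = h ^ (-(1:ℝ)/2) * ∫ x in s, Real.exp (-(C₄ * a ^ 2 * h) * (2 * x + h) ^ 2) := step1
      _ ≤ h ^ (-(1:ℝ)/2) * Real.sqrt (π / (4 * (C₄ * a ^ 2 * h))) :=
          mul_le_mul_of_nonneg_left step2 hrnn
      _ = (Real.sqrt h)⁻¹ * (K / (2 * a) * (Real.sqrt h)⁻¹) := by
          rw [hrpow h hh0, step3]
      _ = K / (2 * a) * ((Real.sqrt h)⁻¹ * (Real.sqrt h)⁻¹) := by ring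
      _ = K / (2 * a) * h⁻¹ := by
          rw [← mul_inv, Real.mul_self_sqrt hh0.le]
  -- integrability of the majorant
  have hmaj : IntegrableOn (fun h : ℝ => K / (2 * a) * h⁻¹) t := by
    rw [ht, ← intervalIntegrable_iff_integrableOn_Ioc_of_le hle]
    apply IntervalIntegrable.const_mul
    apply intervalIntegral.intervalIntegrable_inv
    · intro x hx
      rw [uIcc_of_le hle] at hx
      exact ne_of_gt (lt_of_lt_of_le hl hx.1)
    · exact continuousOn_id
  -- monotonicity
  have hmono : (∫ h in t, ∫ x in s, F x h) ≤ ∫ h in t, K / (2 * a) * h⁻¹ := by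
    refine integral_mono_of_nonneg ?_ hmaj ?_
    · filter_upwards [ae_restrict_mem measurableSet_Ioc] with h hh
      have hh0 : 0 < h := lt_trans hl hh.1
      exact integral_nonneg fun x => hFnonneg x h hh0
    · filter_upwards [ae_restrict_mem measurableSet_Ioc] with h hh
      exact hinner h hh
  refine le_trans hmono ?_
  -- compute the majorant integral
  have hcomp : (∫ h in t, K / (2 * a) * h⁻¹) = K / (2 * a) * (2 * Real.log a) := by
    rw [integral_const_mul, ht, ← intervalIntegral.integral_of_le hle,
      integral_inv_of_pos hl one_pos]
    congr 1
    rw [show (1:ℝ) / (1 / a ^ 2) = a ^ 2 by field_simp, Real.log_pow]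
    norm_num
  rw [hcomp]
  rw [hK]
  have hfin : Real.sqrt (π / C₄) / (2 * a) * (2 * Real.log a)
      = Real.sqrt (π / C₄) * Real.log a / a := by
    field_simp
  rw [hfin]
end
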